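/- The Demazure operators satisfy the braid relation π_i ∘ π_{i+1} ∘ π_i = π_{i+1} ∘ π_i ∘ π_{i+1}. -/

import Mathlib

/-!
Over the fraction field a divided difference is forced to be `∂ g = (g - s g) / (x_a - x_b)`,
and permutations of the variables act on rational functions. Expanding both sides of the braid
relation with this formula, with `s = (a b)` and `t = (b c)` pushed inward, expresses them as
rational functions of `x_a, x_b, x_c` and the six images `w f`, `w ∈ S₃`; they agree identically
once `s t s f = t s t f` is used.
-/

open MvPolynomial Equiv

namespace MvPolynomial

variable {σ R : Type*} [CommRing R]

noncomputable def renameFrac (e : Perm σ) :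
    FractionRing (MvPolynomial σ R) ≃+* FractionRing (MvPolynomial σ R) :=
  IsFractionRing.ringEquivOfRingEquiv (renameEquiv R e).toRingEquiv

local notation "ι" => algebraMap (MvPolynomial σ R) (FractionRing (MvPolynomial σ R))

theorem renameFrac_algebraMap (e : Perm σ) (p : MvPolynomial σ R) :
    renameFrac e (ι p) = ι (rename e p) :=
  IsFractionRing.ringEquivOfRingEquiv_algebraMap _ p

theorem algebraMap_X_sub_X_ne_zero [IsDomain R] {a b : σ} (hab : a ≠ b) :
    ι (X a) - ι (X b) ≠ 0 :=
  sub_ne_zero.2 ((IsFractionRing.injective _ _).ne ((X_injective (R := R)).ne hab))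

variable [DecidableEq σ]

theorem rename_swap_rename_swap (a b : σ) (p : MvPolynomial σ R) :
    rename (swap a b) (rename (swap a b) p) = p := by
  rw [rename_rename, ← Perm.coe_mul, swap_mul_self, Perm.coe_one, rename_id_apply]

theorem rename_swap_braid {a b c : σ} (hab : a ≠ b) (hbc : b ≠ c) (hac : a ≠ c)
    (p : MvPolynomial σ R) :
    rename (swap a b) (rename (swap b c) (rename (swap a b) p)) =
      rename (swap b c) (rename (swap a b) (rename (swap b c) p)) := by
  have braid : swap a b * swap b c * swap a b = swap b c * swap a b * swap b c :=
    calc swap a b * swap b c * swap a b = swap b a * swap c b * swap b a := by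
          rw [swap_comm a b, swap_comm b c]
      _ = swap c a := by rw [swap_mul_swap_mul_swap hbc.symm hac.symm, swap_comm]
      _ = swap b c * swap a b * swap b c := (swap_mul_swap_mul_swap hab hac).symm
  simp only [rename_rename, ← Perm.coe_mul, ← mul_assoc, braid]

def IsDividedDifference (a b : σ) (D : MvPolynomial σ R → MvPolynomial σ R) : Prop :=
  ∀ g, (X a - X b) * D g = g - rename (swap a b) g

namespace IsDividedDifference

variable [IsDomain R]

theorem algebraMap_apply {a b : σ} {D : MvPolynomial σ R → MvPolynomial σ R}
    (hD : IsDividedDifference a b D) (hab : a ≠ b) (g : MvPolynomial σ R) :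
    ι (D g) = (ι g - renameFrac (swap a b) (ι g)) / (ι (X a) - ι (X b)) := by
  rw [eq_div_iff (algebraMap_X_sub_X_ne_zero hab), renameFrac_algebraMap, ← map_sub, ← map_sub,
    ← map_mul, mul_comm, hD g]

theorem demazure_braid {a b c : σ} (hab : a ≠ b) (hbc : b ≠ c) (hac : a ≠ c)
    {Da Db : MvPolynomial σ R → MvPolynomial σ R}
    (hDa : IsDividedDifference a b Da) (hDb : IsDividedDifference b c Db) (f : MvPolynomial σ R) :
    Da (X a * Db (X b * Da (X a * f))) = Db (X b * Da (X a * Db (X b * f))) := by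
  apply IsFractionRing.injective (MvPolynomial σ R) (FractionRing (MvPolynomial σ R))
  simp only [hDa.algebraMap_apply hab, hDb.algebraMap_apply hbc, map_mul, map_sub, map_div₀,
    renameFrac_algebraMap, rename_X, swap_apply_left, swap_apply_right,
    swap_apply_of_ne_of_ne hac.symm hbc.symm, swap_apply_of_ne_of_ne hab hac,
    rename_swap_rename_swap, rename_swap_braid hab hbc hac]
  field_simp (disch := exact algebraMap_X_sub_X_ne_zero (by grind))
  ring

end IsDividedDifference

end MvPolynomial

/-- the Demazure operators π_i(f) = ∂_i(x_i f) satisfy the braid relation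
π_i ∘ π_{i+1} ∘ π_i = π_{i+1} ∘ π_i ∘ π_{i+1}.  Here j = i+1, k = i+2,
`Di` is ∂_i and `Dj` is ∂_{i+1}, so π_i(f) = Di (X i * f), π_{i+1}(f) = Dj (X j * f). -/
theorem demazure_braid (n : ℕ) (i j k : Fin n)
    (hij : (i : ℕ) + 1 = (j : ℕ)) (hjk : (j : ℕ) + 1 = (k : ℕ))
    (Di Dj : MvPolynomial (Fin n) ℤ → MvPolynomial (Fin n) ℤ)
    (hDi : ∀ g, (X i - X j) * Di g = g - rename (Equiv.swap i j) g)
    (hDj : ∀ g, (X j - X k) * Dj g = g - rename (Equiv.swap j k) g)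
    (f : MvPolynomial (Fin n) ℤ) :
    Di (X i * Dj (X j * Di (X i * f))) = Dj (X j * Di (X i * Dj (X j * f))) :=
  IsDividedDifference.demazure_braid (Fin.ne_of_val_ne (by omega)) (Fin.ne_of_val_ne (by omega))
    (Fin.ne_of_val_ne (by omega)) hDi hDj f
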